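/- Let λ, μ ∈ ℝ with |λ| > 1 > |μ| and |λ| ≥ 2, and let ψ : ℝ → ℝ be a C¹ function with M := sup|ψ'| < ∞. Given constants c with 0 < c < |λ|, a > 0, and λ' with 1 < λ' < |λ|, there exist a₀ ∈ (0,a) and δ₀ > 0 such that for every C¹ function φ : ℝ → ℝ with sup|φ| ≤ δ₀ and |μ − ψ(x)φ'(y)| ≤ c for all x,y ∈ ℝ, the C¹ map F : ℝ² → ℝ² defined by F(x,y) = (λx, μy − ψ(x)φ(y)) satisfies: (i) DF_p maps cl(C^u_{a₀}) ∖ {(0,0)} into C^u_{a₀} for every p ∈ ℝ²; (ii) |DF_p(v)| ≥ λ'|v| for every v ∈ C^u_{a₀} and every p; (iii) for every C¹ curve γ with γ'(t) ∈ C^u_{a₀} for all t, diam(F∘γ) ≥ λ'·diam(γ). -/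

import Mathlib

noncomputable section

/-- The Euclidean plane `ℝ²`. -/
abbrev E2 : Type := EuclideanSpace ℝ (Fin 2)

/-- The unstable cone of aperture `a` in `ℝ²`: `{(v₁,v₂) : |v₂| < a|v₁|}`. -/
def coneUE (a : ℝ) : Set E2 := {v | |v 1| < a * |v 0|}

/-- The map `F(x,y) = (λx, μy − ψ(x)φ(y))`. -/
def Fmap (lam mu : ℝ) (ψ φ : ℝ → ℝ) : E2 → E2 :=
  fun v => WithLp.toLp 2 ![lam * v 0, mu * v 1 - ψ (v 0) * φ (v 1)]

/-!
The Jacobian of `F` at `p = (x, y)` is lower triangular, with rows `(λ, 0)` and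
`(-ψ'(x)φ(y), μ - ψ(x)φ'(y))`. For `w = (w₁, w₂)` in the closed cone, the second coordinate
of `DF_p w` is at most `(c a₀ + M δ₀)|w₁| < a₀ |λ w₁|` once `δ₀` is small, which gives (i).
The first coordinate is `λ w₁` while `‖w‖ ≤ √(1 + a₀²)|w₁|`, so choosing `a₀` with
`λ'² (1 + a₀²) ≤ λ²` gives (ii). For (iii), the first coordinate of the tangent of a curve in the
open cone never vanishes, hence has constant sign, and then every chord `γ(v) - γ(u)` lies in the
closed cone. Since the first coordinate of `F` is linear, chords are expanded by `λ'` just like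
tangent vectors, and so is the diameter.
-/

open Set Metric Filter Topology Bornology

section Derivative

variable (lam mu : ℝ) (ψ φ : ℝ → ℝ)

def fmapDeriv (p : E2) : E2 →L[ℝ] E2 :=
  Matrix.toEuclideanCLM (n := Fin 2) (𝕜 := ℝ)
    !![lam, 0; -(deriv ψ (p 0) * φ (p 1)), mu - ψ (p 0) * deriv φ (p 1)]

theorem fmapDeriv_apply_zero (p w : E2) : fmapDeriv lam mu ψ φ p w 0 = lam * w 0 := by
  simp [fmapDeriv, Matrix.ofLp_toEuclideanCLM, Matrix.mulVec, dotProduct]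

theorem fmapDeriv_apply_one (p w : E2) :
    fmapDeriv lam mu ψ φ p w 1 =
      (mu - ψ (p 0) * deriv φ (p 1)) * w 1 - deriv ψ (p 0) * φ (p 1) * w 0 := by
  simp only [fmapDeriv, Matrix.ofLp_toEuclideanCLM, Matrix.mulVec, dotProduct, Matrix.of_apply,
    Matrix.cons_val', Matrix.cons_val_fin_one, Matrix.cons_val_one, Fin.sum_univ_two,
    Matrix.cons_val_zero]
  ring

theorem Fmap_apply_zero (v : E2) : Fmap lam mu ψ φ v 0 = lam * v 0 := rfl

variable {ψ φ}

theorem hasFDerivAt_Fmap (hψ : Differentiable ℝ ψ) (hφ : Differentiable ℝ φ) (p : E2) :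
    HasFDerivAt (Fmap lam mu ψ φ) (fmapDeriv lam mu ψ φ p) p := by
  rw [← hasFDerivWithinAt_univ, hasFDerivWithinAt_euclidean]
  intro i
  rw [hasFDerivWithinAt_univ]
  have h0 := PiLp.hasFDerivAt_apply (𝕜 := ℝ) 2 p 0
  have h1 := PiLp.hasFDerivAt_apply (𝕜 := ℝ) 2 p 1
  fin_cases i
  · refine (h0.const_mul lam).congr_fderiv ?_
    ext w
    simp [fmapDeriv_apply_zero]
  · refine ((h1.const_mul mu).sub (((hψ _).hasDerivAt.comp_hasFDerivAt p h0).mul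
      ((hφ _).hasDerivAt.comp_hasFDerivAt p h1))).congr_fderiv ?_
    ext w
    simp only [Fin.mk_one, ContinuousLinearMap.comp_apply, PiLp.proj_apply, fmapDeriv_apply_one,
      sub_apply, add_apply, smul_apply, smul_eq_mul, Function.comp_apply]
    ring

end Derivative

def closedConeUE (a : ℝ) : Set E2 := {v | |v 1| ≤ a * |v 0|}

theorem mem_coneUE {a : ℝ} {v : E2} : v ∈ coneUE a ↔ |v 1| < a * |v 0| := Iff.rfl

theorem mem_closedConeUE {a : ℝ} {v : E2} : v ∈ closedConeUE a ↔ |v 1| ≤ a * |v 0| := Iff.rfl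

theorem closure_coneUE_subset (a : ℝ) : closure (coneUE a) ⊆ closedConeUE a :=
  closure_minimal (fun _ hv => (mem_coneUE.1 hv).le) (isClosed_le (by fun_prop) (by fun_prop))

theorem apply_zero_ne_zero_of_mem_closedConeUE {a : ℝ} {w : E2} (hw : w ∈ closedConeUE a)
    (hw0 : w ≠ 0) : w 0 ≠ 0 := by
  intro h0
  have h1 : w 1 = 0 := abs_nonpos_iff.mp (by simpa [h0] using mem_closedConeUE.1 hw)
  exact hw0 (by ext i; fin_cases i <;> simp [h0, h1])

theorem sq_norm_E2 (v : E2) : ‖v‖ ^ 2 = v 0 ^ 2 + v 1 ^ 2 := by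
  simp [EuclideanSpace.norm_sq_eq, Fin.sum_univ_two]

theorem mul_norm_le_norm_of_mem_closedConeUE {a κ lam : ℝ} {w z : E2} (hκ : 0 ≤ κ)
    (hκa : κ ^ 2 * (1 + a ^ 2) ≤ lam ^ 2) (hw : w ∈ closedConeUE a) (hz : z 0 = lam * w 0) :
    κ * ‖w‖ ≤ ‖z‖ := by
  have hw' : w 1 ^ 2 ≤ a ^ 2 * w 0 ^ 2 := by
    simpa [mul_pow, sq_abs] using pow_le_pow_left₀ (abs_nonneg _) (mem_closedConeUE.1 hw) 2
  have hsq : (κ * ‖w‖) ^ 2 ≤ (lam * w 0) ^ 2 := by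
    rw [mul_pow, mul_pow, sq_norm_E2]
    nlinarith [mul_le_mul_of_nonneg_left hw' (sq_nonneg κ),
      mul_le_mul_of_nonneg_right hκa (sq_nonneg (w 0))]
  calc κ * ‖w‖ ≤ |lam * w 0| := by
        simpa [abs_of_nonneg (by positivity : 0 ≤ κ * ‖w‖)] using sq_le_sq.mp hsq
    _ = ‖z 0‖ := by rw [hz, Real.norm_eq_abs]
    _ ≤ ‖z‖ := PiLp.norm_apply_le z 0

theorem exists_mem_Ioo_sq_mul_one_add_sq_le {a κ lam : ℝ} (ha : 0 < a) (hκ : κ ^ 2 < lam ^ 2) :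
    ∃ a₀ ∈ Ioo 0 a, κ ^ 2 * (1 + a₀ ^ 2) ≤ lam ^ 2 := by
  have hlim : Tendsto (fun t : ℝ => κ ^ 2 * (1 + t ^ 2)) (𝓝[>] 0) (𝓝 (κ ^ 2)) := by
    have : Continuous (fun t : ℝ => κ ^ 2 * (1 + t ^ 2)) := by fun_prop
    simpa using (this.tendsto 0).mono_left nhdsWithin_le_nhds
  obtain ⟨a₀, ha₀, hlt⟩ := ((eventually_mem_set.2 (Ioo_mem_nhdsGT ha)).and
    (hlim.eventually (eventually_lt_nhds hκ))).exists
  exact ⟨a₀, ha₀, hlt.le⟩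

theorem fmapDeriv_mem_coneUE {lam mu M δ c a : ℝ} {ψ φ : ℝ → ℝ} (hM : ∀ x, |deriv ψ x| ≤ M)
    (hφ : ∀ y, |φ y| ≤ δ) (hc : ∀ x y, |mu - ψ x * deriv φ y| ≤ c)
    (hδ : M * δ < a * (|lam| - c)) (p : E2) {w : E2} (hw : w ∈ closedConeUE a) (hw0 : w ≠ 0) :
    fmapDeriv lam mu ψ φ p w ∈ coneUE a := by
  have hw0' : 0 < |w 0| := abs_pos.2 (apply_zero_ne_zero_of_mem_closedConeUE hw hw0)
  have hM0 : 0 ≤ M := (abs_nonneg _).trans (hM 0)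
  have hc0 : 0 ≤ c := (abs_nonneg _).trans (hc 0 0)
  rw [mem_coneUE, fmapDeriv_apply_zero, fmapDeriv_apply_one, abs_mul lam]
  calc |(mu - ψ (p 0) * deriv φ (p 1)) * w 1 - deriv ψ (p 0) * φ (p 1) * w 0|
      ≤ c * (a * |w 0|) + M * δ * |w 0| := by
        refine (abs_sub _ _).trans (add_le_add ?_ ?_) <;> simp only [abs_mul]
        · exact mul_le_mul (hc _ _) (mem_closedConeUE.1 hw) (abs_nonneg _) hc0
        · gcongr
          exacts [hM _, hφ _]
    _ < a * (|lam| * |w 0|) := by nlinarith [mul_lt_mul_of_pos_right hδ hw0']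

theorem abs_sub_le_sub_of_abs_deriv_le {D : Set ℝ} (hD : Convex ℝ D) {f g f' g' : ℝ → ℝ}
    (hf : ∀ x ∈ D, HasDerivWithinAt f (f' x) D x) (hg : ∀ x ∈ D, HasDerivWithinAt g (g' x) D x)
    (hle : ∀ x ∈ D, |g' x| ≤ f' x) {u v : ℝ} (hu : u ∈ D) (hv : v ∈ D) (huv : u ≤ v) :
    |g v - g u| ≤ f v - f u := by
  have hmono : ∀ σ : ℝ, |σ| ≤ 1 → MonotoneOn (fun x => f x - σ * g x) D := fun σ hσ =>
    monotoneOn_of_hasDerivWithinAt_nonneg (f' := fun x => f' x - σ * g' x) hD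
      (fun x hx => ((hf x hx).sub ((hg x hx).const_mul σ)).continuousWithinAt)
      (fun x hx => ((hf x (interior_subset hx)).sub
        ((hg x (interior_subset hx)).const_mul σ)).mono interior_subset)
      (fun x hx => by
        have := hle x (interior_subset hx)
        have := abs_mul σ (g' x) ▸ le_abs_self (σ * g' x)
        nlinarith [abs_nonneg (g' x)])
  have hsub := hmono 1 (by simp) hu hv huv
  have hadd := hmono (-1) (by simp) hu hv huv
  simp only at hsub hadd
  exact abs_le.mpr ⟨by linarith, by linarith⟩

theorem sub_mem_closedConeUE_of_derivWithin_mem {a α β : ℝ} (ha : 0 ≤ a) {γ : ℝ → E2}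
    (hγ : ContDiffOn ℝ 1 γ (Icc α β))
    (hcone : ∀ t ∈ Icc α β, derivWithin γ (Icc α β) t ∈ coneUE a)
    {u v : ℝ} (hu : u ∈ Icc α β) (hv : v ∈ Icc α β) : γ v - γ u ∈ closedConeUE a := by
  wlog huv : u ≤ v generalizing u v
  · have := this hv hu (le_of_not_ge huv)
    simpa [mem_closedConeUE, abs_sub_comm] using this
  rcases (hu.1.trans hu.2).eq_or_lt with rfl | hαβ
  · obtain rfl : u = v := by grind
    simp [mem_closedConeUE]
  set s := Icc α β
  set γ' := derivWithin γ s
  have hcoord : ∀ i : Fin 2, ∀ t ∈ s, HasDerivWithinAt (fun t => γ t i) (γ' t i) s t :=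
    fun i t ht => (PiLp.hasFDerivAt_apply (𝕜 := ℝ) 2 (γ t) i).comp_hasDerivWithinAt t
      (hγ.differentiableOn one_ne_zero t ht).hasDerivWithinAt
  have hγ'0 : ContinuousOn (fun t => γ' t 0) s :=
    (PiLp.continuous_apply 2 _ 0).comp_continuousOn
      (hγ.continuousOn_derivWithin (uniqueDiffOn_Icc hαβ) le_rfl)
  have hne : ∀ t ∈ s, γ' t 0 ≠ 0 := fun t ht h0 => by
    simpa [h0] using (abs_nonneg _).trans_lt (mem_coneUE.1 (hcone t ht))
  -- the first coordinate of the tangent keeps a fixed sign `σ` along the curve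
  obtain ⟨σ, hσ, hσγ'⟩ : ∃ σ : ℝ, |σ| = 1 ∧ ∀ t ∈ s, |γ' t 0| = σ * γ' t 0 := by
    rcases isPreconnected_Icc.eq_or_eq_neg_of_sq_eq hγ'0.abs hγ'0
      (fun t _ => by simp [sq_abs]) (fun ht => hne _ ht) with h | h
    · exact ⟨1, by simp, fun t ht => by simpa using h ht⟩
    · exact ⟨-1, by simp, fun t ht => by simpa using h ht⟩
  have key := abs_sub_le_sub_of_abs_deriv_le (convex_Icc α β)
    (fun t ht => ((hcoord 0 t ht).const_mul σ).const_mul a) (hcoord 1)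
    (fun t ht => by simpa [hσγ' t ht, mul_assoc] using (mem_coneUE.1 (hcone t ht)).le) hu hv huv
  rw [mem_closedConeUE, PiLp.sub_apply, PiLp.sub_apply]
  calc |γ v 1 - γ u 1| ≤ a * (σ * (γ v 0 - γ u 0)) := by linarith
    _ ≤ a * |γ v 0 - γ u 0| := by
      gcongr
      simpa [abs_mul, hσ] using le_abs_self (σ * (γ v 0 - γ u 0))

theorem mul_diam_le_diam_image {X Y : Type*} [PseudoMetricSpace X] [PseudoMetricSpace Y]
    {f : X → Y} {s : Set X} {K : ℝ} (hK : 0 < K) (hs : IsBounded (f '' s))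
    (hf : ∀ x ∈ s, ∀ y ∈ s, K * dist x y ≤ dist (f x) (f y)) : K * diam s ≤ diam (f '' s) := by
  rw [mul_comm, ← le_div_iff₀ hK]
  refine diam_le_of_forall_dist_le (by positivity) fun x hx y hy => ?_
  rw [le_div_iff₀ hK, mul_comm]
  exact (hf x hx y hy).trans
    (dist_le_diam_of_mem hs (mem_image_of_mem f hx) (mem_image_of_mem f hy))

theorem unstable_cones_saddle_general
    (lam mu : ℝ)
    (ψ : ℝ → ℝ) (hψ : ContDiff ℝ 1 ψ) (M : ℝ) (hM : ∀ x, |deriv ψ x| ≤ M)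
    (c : ℝ) (hc : c < |lam|)
    (a : ℝ) (ha : 0 < a) (lam' : ℝ) (hl1 : 1 < lam') (hl2 : lam' < |lam|) :
    ∃ a₀ ∈ Set.Ioo (0:ℝ) a, ∃ δ₀ > (0:ℝ),
      ∀ φ : ℝ → ℝ, ContDiff ℝ 1 φ → (∀ y, |φ y| ≤ δ₀) →
        (∀ x y, |mu - ψ x * deriv φ y| ≤ c) →
        -- (i) invariance of the closed cone minus the origin
        (∀ p : E2, ∀ w ∈ closure (coneUE a₀) \ {0},
            fderiv ℝ (Fmap lam mu ψ φ) p w ∈ coneUE a₀) ∧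
        -- (ii) uniform expansion of cone vectors
        (∀ p : E2, ∀ w ∈ coneUE a₀,
            lam' * ‖w‖ ≤ ‖fderiv ℝ (Fmap lam mu ψ φ) p w‖) ∧
        -- (iii) expansion of the diameter of cone-tangent curves
        (∀ (γ : ℝ → E2) (α β : ℝ), α ≤ β → ContDiffOn ℝ 1 γ (Set.Icc α β) →
            (∀ t ∈ Set.Icc α β, derivWithin γ (Set.Icc α β) t ∈ coneUE a₀) →
            lam' * Metric.diam (γ '' Set.Icc α β) ≤
              Metric.diam (Fmap lam mu ψ φ '' (γ '' Set.Icc α β))) := by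
  have hlam' : 0 < lam' := one_pos.trans hl1
  obtain ⟨a₀, ha₀, hexp⟩ := exists_mem_Ioo_sq_mul_one_add_sq_le ha (show lam' ^ 2 < lam ^ 2 by
    simpa [sq_abs] using pow_lt_pow_left₀ hl2 hlam'.le two_ne_zero)
  obtain ⟨δ₀, hδ₀, hMδ₀⟩ := exists_pos_mul_lt (mul_pos ha₀.1 (sub_pos.2 hc)) M
  refine ⟨a₀, ha₀, δ₀, hδ₀, fun φ hφ hφδ hφc => ?_⟩
  have hF (p : E2) : HasFDerivAt (Fmap lam mu ψ φ) (fmapDeriv lam mu ψ φ p) p :=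
    hasFDerivAt_Fmap lam mu (hψ.differentiable one_ne_zero) (hφ.differentiable one_ne_zero) p
  refine ⟨fun p w hw => ?_, fun p w hw => ?_, fun γ α β _ hγ hγc => ?_⟩
  · rw [(hF p).fderiv]
    exact fmapDeriv_mem_coneUE hM hφδ hφc hMδ₀ p (closure_coneUE_subset a₀ hw.1) hw.2
  · rw [(hF p).fderiv]
    exact mul_norm_le_norm_of_mem_closedConeUE hlam'.le hexp
      (closure_coneUE_subset a₀ (subset_closure hw)) (fmapDeriv_apply_zero ..)
  · have hcont : Continuous (Fmap lam mu ψ φ) :=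
      continuous_iff_continuousAt.2 fun p => (hF p).continuousAt
    refine mul_diam_le_diam_image hlam'
      ((isCompact_Icc.image_of_continuousOn hγ.continuousOn).image hcont).isBounded ?_
    rintro _ ⟨u, hu, rfl⟩ _ ⟨v, hv, rfl⟩
    rw [dist_eq_norm, dist_eq_norm]
    exact mul_norm_le_norm_of_mem_closedConeUE hlam'.le hexp
      (sub_mem_closedConeUE_of_derivWithin_mem ha₀.1.le hγ hγc hv hu)
      (by simp [Fmap_apply_zero, mul_sub])

/-- **Lemma 2.3.2 (existence of unstable cones, saddle case).** -/
theorem unstable_cones_saddle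
    (lam mu : ℝ) (hlam : |lam| > 1) (hmu : 1 > |mu|) (hlam2 : |lam| ≥ 2)
    (ψ : ℝ → ℝ) (hψ : ContDiff ℝ 1 ψ) (M : ℝ) (hM : ∀ x, |deriv ψ x| ≤ M)
    (c : ℝ) (hc0 : 0 < c) (hc : c < |lam|)
    (a : ℝ) (ha : 0 < a) (lam' : ℝ) (hl1 : 1 < lam') (hl2 : lam' < |lam|) :
    ∃ a₀ ∈ Set.Ioo (0:ℝ) a, ∃ δ₀ > (0:ℝ),
      ∀ φ : ℝ → ℝ, ContDiff ℝ 1 φ → (∀ y, |φ y| ≤ δ₀) →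
        (∀ x y, |mu - ψ x * deriv φ y| ≤ c) →
        -- (i) invariance of the closed cone minus the origin
        (∀ p : E2, ∀ w ∈ closure (coneUE a₀) \ {0},
            fderiv ℝ (Fmap lam mu ψ φ) p w ∈ coneUE a₀) ∧
        -- (ii) uniform expansion of cone vectors
        (∀ p : E2, ∀ w ∈ coneUE a₀,
            lam' * ‖w‖ ≤ ‖fderiv ℝ (Fmap lam mu ψ φ) p w‖) ∧
        -- (iii) expansion of the diameter of cone-tangent curves
        (∀ (γ : ℝ → E2) (α β : ℝ), α ≤ β → ContDiffOn ℝ 1 γ (Set.Icc α β) →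
            (∀ t ∈ Set.Icc α β, derivWithin γ (Set.Icc α β) t ∈ coneUE a₀) →
            lam' * Metric.diam (γ '' Set.Icc α β) ≤
              Metric.diam (Fmap lam mu ψ φ '' (γ '' Set.Icc α β))) :=
  unstable_cones_saddle_general lam mu ψ hψ M hM c hc a ha lam' hl1 hl2
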